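/- arXiv:1806.06400 — 3 statements merged into one kernel-verified Lean document; each statement's English description precedes it below -/
import Mathlib

section
/- For κ ∈ (0, 1/2), the integral ∫₀^∞ (|s−1|^κ · 1_{s>1} − s^κ)² ds is finite and strictly positive. -/
/-! On `(0, 1]` the integrand is `s ^ (2κ)`, bounded and positive. For `s > 1` it is
`(s ^ κ - (s - 1) ^ κ) ^ 2 ≤ s ^ (2κ - 2)`, which is integrable at infinity exactly because
`κ < 1/2`. -/

open MeasureTheory Set Real

variable {κ : ℝ}

theorem rpow_sub_rpow_sub_one_le (hκ : κ ≤ 1) {s : ℝ} (hs : 1 < s) :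
    s ^ κ - (s - 1) ^ κ ≤ s ^ (κ - 1) := by
  have hs0 : 0 < s - 1 := sub_pos.mpr hs
  -- `t ↦ t ^ (κ - 1)` is antitone, so
  -- `(s - 1) ^ κ = (s - 1) (s - 1) ^ (κ - 1) ≥ (s - 1) s ^ (κ - 1) = s ^ κ - s ^ (κ - 1)`.
  have h : s ^ (κ - 1) ≤ (s - 1) ^ (κ - 1) :=
    rpow_le_rpow_of_nonpos hs0 (by linarith) (by linarith)
  have hsplit : ∀ t : ℝ, 0 < t → t ^ κ = t * t ^ (κ - 1) := fun t ht => by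
    rw [rpow_sub ht, rpow_one, mul_div_cancel₀ _ ht.ne']
  rw [hsplit s (by linarith), hsplit (s - 1) hs0]
  nlinarith

theorem sq_rpow_sub_one_sub_rpow_le (hκ0 : 0 ≤ κ) (hκ1 : κ ≤ 1) {s : ℝ} (hs : 1 < s) :
    ((s - 1) ^ κ - s ^ κ) ^ 2 ≤ s ^ (2 * κ - 2) := by
  have hmono : (s - 1) ^ κ ≤ s ^ κ := rpow_le_rpow (by linarith) (by linarith) hκ0
  calc ((s - 1) ^ κ - s ^ κ) ^ 2 = (s ^ κ - (s - 1) ^ κ) ^ 2 := by ring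
    _ ≤ (s ^ (κ - 1)) ^ 2 :=
      pow_le_pow_left₀ (by linarith) (rpow_sub_rpow_sub_one_le hκ1 hs) 2
    _ = s ^ (2 * κ - 2) := by
      rw [← rpow_mul_natCast (by linarith)]
      ring_nf

theorem integrableOn_Ioi_one_sq_rpow_sub_one_sub_rpow (hκ0 : 0 ≤ κ) (hκ : κ < 1 / 2) :
    IntegrableOn (fun s : ℝ => ((s - 1) ^ κ - s ^ κ) ^ 2) (Ioi 1) := by
  have hcont : Continuous fun s : ℝ => ((s - 1) ^ κ - s ^ κ) ^ 2 := by
    have := continuous_rpow_const hκ0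
    fun_prop
  refine Integrable.mono' (integrableOn_Ioi_rpow_of_lt (a := 2 * κ - 2) (by linarith) zero_lt_one)
    hcont.aestronglyMeasurable ?_
  filter_upwards [ae_restrict_mem measurableSet_Ioi] with s hs
  rw [norm_of_nonneg (sq_nonneg _)]
  exact sq_rpow_sub_one_sub_rpow_le hκ0 (by linarith) hs

theorem cusp_Rminus_finite_pos (κ : ℝ) (hκ0 : 0 < κ) (hκ : κ < 1/2) :
    IntegrableOn
      (fun s : ℝ => ((if 1 < s then |s - 1| ^ κ else 0) - s ^ κ) ^ 2) (Set.Ioi 0) ∧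
    0 < ∫ s in Set.Ioi (0:ℝ), ((if 1 < s then |s - 1| ^ κ else 0) - s ^ κ) ^ 2 := by
  set f := fun s : ℝ => ((if 1 < s then |s - 1| ^ κ else 0) - s ^ κ) ^ 2
  have hf_le : EqOn f (fun s => (s ^ κ) ^ 2) (Ioc 0 1) := fun s hs => by
    simp [f, not_lt.mpr hs.2]
  have hf_gt : EqOn f (fun s => ((s - 1) ^ κ - s ^ κ) ^ 2) (Ioi 1) := fun s (hs : 1 < s) => by
    simp [f, hs, abs_of_pos (sub_pos.mpr hs)]
  have hint : IntegrableOn f (Ioi 0) := by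
    rw [← Ioc_union_Ioi_eq_Ioi zero_le_one]
    exact ((((continuous_rpow_const hκ0.le).pow 2).integrableOn_Ioc).congr_fun hf_le.symm
      measurableSet_Ioc).union
      ((integrableOn_Ioi_one_sq_rpow_sub_one_sub_rpow hκ0.le hκ).congr_fun hf_gt.symm
        measurableSet_Ioi)
  refine ⟨hint, ?_⟩
  rw [setIntegral_pos_iff_support_of_nonneg_ae (.of_forall fun s => sq_nonneg _) hint]
  have hsupp : Ioo 0 1 ⊆ Function.support f ∩ Ioi 0 := fun s hs =>
    ⟨(hf_le (Ioo_subset_Ioc_self hs)).trans_ne (pow_pos (rpow_pos_of_pos hs.1 κ) 2).ne', hs.1⟩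
  exact (by simp : (0 : ENNReal) < volume (Ioo (0 : ℝ) 1)).trans_le (measure_mono hsupp)
end

section
/- For κ ∈ (0, 1/2), the integral ∫_{−1}^∞ (|s+1|^κ − |s|^κ · 1_{s>0})² ds is finite and strictly positive. -/
/-! For `s > 1` concavity of `x ↦ x ^ κ` bounds the integrand by `κ² s^(2κ-2)`, which is
integrable at infinity exactly because `κ < 1/2`; on `[-1, 1]` the integrand is continuous.
It is strictly positive on `(-1, 0)`, where the second term vanishes, so the integral is
positive. -/

open MeasureTheory

namespace Real

lemma rpow_add_one_sub_rpow_le {s κ : ℝ} (hs : 0 < s) (hκ0 : 0 ≤ κ) (hκ1 : κ ≤ 1) :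
    (s + 1) ^ κ - s ^ κ ≤ κ * s ^ (κ - 1) := by
  have hsplit : (s + 1) ^ κ = s ^ κ * (1 + s⁻¹) ^ κ := by
    rw [← mul_rpow hs.le (by positivity), mul_add, mul_one, mul_inv_cancel₀ hs.ne']
  have hbernoulli : (1 + s⁻¹) ^ κ ≤ 1 + κ * s⁻¹ :=
    rpow_one_add_le_one_add_mul_self (by linarith [inv_pos.2 hs]) hκ0 hκ1
  have hpow : s ^ κ * s⁻¹ = s ^ (κ - 1) := by rw [rpow_sub_one hs.ne', div_eq_mul_inv]
  calc (s + 1) ^ κ - s ^ κ ≤ s ^ κ * (1 + κ * s⁻¹) - s ^ κ := by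
        rw [hsplit]; gcongr
    _ = κ * s ^ (κ - 1) := by rw [← hpow]; ring

end Real

/-- The increment `|s + 1|^κ - |s|^κ 1_{s > 0}`, written with `max s 0` so that it is visibly
continuous for `κ ≥ 0`. -/
noncomputable def cuspIncrement (κ s : ℝ) : ℝ := |s + 1| ^ κ - max s 0 ^ κ

lemma cuspIncrement_eq {κ : ℝ} (hκ : κ ≠ 0) (s : ℝ) :
    cuspIncrement κ s = |s + 1| ^ κ - (if 0 < s then |s| ^ κ else 0) := by
  rw [cuspIncrement]
  split_ifs with hs
  · rw [max_eq_left hs.le, abs_of_pos hs]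
  · rw [max_eq_right (not_lt.1 hs), Real.zero_rpow hκ]

lemma continuous_cuspIncrement {κ : ℝ} (hκ : 0 ≤ κ) : Continuous (cuspIncrement κ) :=
  ((continuous_add_const 1).abs.rpow_const fun _ => Or.inr hκ).sub
    ((continuous_id.max continuous_const).rpow_const fun _ => Or.inr hκ)

lemma sq_cuspIncrement_le {κ s : ℝ} (hκ0 : 0 ≤ κ) (hκ1 : κ ≤ 1) (hs : 0 < s) :
    cuspIncrement κ s ^ 2 ≤ κ ^ 2 * s ^ (2 * (κ - 1)) := by
  have hincr : cuspIncrement κ s = (s + 1) ^ κ - s ^ κ := by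
    rw [cuspIncrement, abs_of_pos (by linarith), max_eq_left hs.le]
  have hmono : s ^ κ ≤ (s + 1) ^ κ := Real.rpow_le_rpow hs.le (by linarith) hκ0
  calc cuspIncrement κ s ^ 2 ≤ (κ * s ^ (κ - 1)) ^ 2 := by
        rw [hincr]
        exact pow_le_pow_left₀ (sub_nonneg.2 hmono) (Real.rpow_add_one_sub_rpow_le hs hκ0 hκ1) 2
    _ = κ ^ 2 * s ^ (2 * (κ - 1)) := by
        rw [mul_pow, mul_comm 2, ← Real.rpow_mul_natCast hs.le (κ - 1) 2]; norm_cast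

lemma integrableOn_sq_cuspIncrement_Ioi {κ : ℝ} (hκ0 : 0 ≤ κ) (hκ : κ < 1 / 2) :
    IntegrableOn (fun s => cuspIncrement κ s ^ 2) (Set.Ioi (-1)) := by
  have hcont : Continuous fun s => cuspIncrement κ s ^ 2 := (continuous_cuspIncrement hκ0).pow 2
  have htail : IntegrableOn (fun s => cuspIncrement κ s ^ 2) (Set.Ioi 1) := by
    have hbound : IntegrableOn (fun s : ℝ => κ ^ 2 * s ^ (2 * (κ - 1))) (Set.Ioi 1) :=
      (integrableOn_Ioi_rpow_of_lt (by linarith) one_pos).const_mul (κ ^ 2)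
    refine Integrable.mono' hbound hcont.aestronglyMeasurable.restrict
      ((ae_restrict_iff' measurableSet_Ioi).2 ?_)
    refine Filter.Eventually.of_forall fun s (hs : 1 < s) => ?_
    rw [Real.norm_of_nonneg (sq_nonneg _)]
    exact sq_cuspIncrement_le hκ0 (by linarith) (by linarith)
  rw [← Set.Ioc_union_Ioi_eq_Ioi (by norm_num : (-1 : ℝ) ≤ 1)]
  exact hcont.integrableOn_Ioc.union htail

lemma cuspIncrement_pos_of_mem_Ioo {κ s : ℝ} (hκ : κ ≠ 0) (hs : s ∈ Set.Ioo (-1) 0) :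
    0 < cuspIncrement κ s := by
  rw [cuspIncrement, max_eq_right hs.2.le, Real.zero_rpow hκ, sub_zero]
  exact Real.rpow_pos_of_pos (abs_pos.2 (by linarith [hs.1])) κ

lemma setIntegral_sq_cuspIncrement_pos {κ : ℝ} (hκ0 : 0 < κ) (hκ : κ < 1 / 2) :
    0 < ∫ s in Set.Ioi (-1), cuspIncrement κ s ^ 2 := by
  rw [setIntegral_pos_iff_support_of_nonneg_ae (Filter.Eventually.of_forall fun s => sq_nonneg _)
    (integrableOn_sq_cuspIncrement_Ioi hκ0.le hκ)]
  have hsupp : Set.Ioo (-1 : ℝ) 0 ⊆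
      Function.support (fun s => cuspIncrement κ s ^ 2) ∩ Set.Ioi (-1) :=
    fun s hs => ⟨(pow_pos (cuspIncrement_pos_of_mem_Ioo hκ0.ne' hs) 2).ne', hs.1⟩
  calc (0 : ENNReal) < volume (Set.Ioo (-1 : ℝ) 0) := by rw [Real.volume_Ioo]; norm_num
    _ ≤ _ := measure_mono hsupp

theorem cusp_Rplus_finite_pos (κ : ℝ) (hκ0 : 0 < κ) (hκ : κ < 1/2) :
    IntegrableOn
      (fun s : ℝ => (|s + 1| ^ κ - (if 0 < s then |s| ^ κ else 0)) ^ 2) (Set.Ioi (-1)) ∧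
    0 < ∫ s in Set.Ioi (-1:ℝ), (|s + 1| ^ κ - (if 0 < s then |s| ^ κ else 0)) ^ 2 := by
  simp_rw [← cuspIncrement_eq hκ0.ne']
  exact ⟨integrableOn_sq_cuspIncrement_Ioi hκ0.le hκ, setIntegral_sq_cuspIncrement_pos hκ0 hκ⟩
end

section
/- Let κ ∈ (0, 1/2) and let λ : ℝ → ℝ be continuously differentiable and strictly positive. Define S(t) = λ(t) |t/δ|^κ 1_{0 ≤ t ≤ δ} + λ(t) 1_{t > δ} for fixed δ > 0. If τ* > τ₀ and ∫₀^T (S(t − τ*) − S(t − τ₀))² dt = 0 with τ₀ + δ < T, then τ* = τ₀. -/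
/-!
Before the later arrival `τ'` the delayed profile `S (· - τ')` vanishes, while `S (· - τ₀)` is
already strictly positive on `(τ₀, τ')` because `λ > 0`. So the squared difference is a
nonnegative integrable function that is strictly positive on a nondegenerate subinterval of
`[0, T]`, and its integral over `[0, T]` cannot vanish.
-/

open MeasureTheory Set

theorem intervalIntegral_pos_of_pos_on_subinterval {f : ℝ → ℝ} {a b c d : ℝ}
    (hac : a ≤ c) (hcd : c < d) (hdb : d ≤ b) (hf : ∀ t, 0 ≤ f t)
    (hfi : IntervalIntegrable f volume a b) (hpos : ∀ t ∈ Ioo c d, 0 < f t) :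
    0 < ∫ t in a..b, f t :=
  (intervalIntegral.intervalIntegral_pos_of_pos_on
      (hfi.mono_set (uIcc_subset_uIcc (mem_uIcc_of_le hac (hcd.le.trans hdb))
        (mem_uIcc_of_le (hac.trans hcd.le) hdb))) hpos hcd).trans_le
    (intervalIntegral.integral_mono_interval hac hcd.le hdb
      (Filter.Eventually.of_forall hf) hfi)

noncomputable def cuspProfile (lam : ℝ → ℝ) (κ δ : ℝ) (t : ℝ) : ℝ :=
  if 0 ≤ t ∧ t ≤ δ then lam t * |t / δ| ^ κ else if δ < t then lam t else 0

section cuspProfile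

variable {lam : ℝ → ℝ} {κ δ : ℝ}

theorem cuspProfile_nonneg (hlam : ∀ t, 0 ≤ lam t) (t : ℝ) : 0 ≤ cuspProfile lam κ δ t := by
  unfold cuspProfile
  split_ifs
  · exact mul_nonneg (hlam t) (Real.rpow_nonneg (abs_nonneg _) κ)
  · exact hlam t
  · exact le_rfl

theorem cuspProfile_le (hκ : 0 ≤ κ) (hδ : 0 ≤ δ) (hlam : ∀ t, 0 ≤ lam t) (t : ℝ) :
    cuspProfile lam κ δ t ≤ lam t := by
  unfold cuspProfile
  split_ifs with ht
  · have hratio : |t / δ| ≤ 1 := by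
      rw [abs_div, abs_of_nonneg hδ, abs_of_nonneg ht.1]
      exact div_le_one_of_le₀ ht.2 hδ
    exact mul_le_of_le_one_right (hlam t) (Real.rpow_le_one (abs_nonneg _) hratio hκ)
  · exact le_rfl
  · exact hlam t

theorem cuspProfile_of_neg (hδ : 0 ≤ δ) {t : ℝ} (ht : t < 0) : cuspProfile lam κ δ t = 0 := by
  unfold cuspProfile
  rw [if_neg (fun h => ht.not_ge h.1), if_neg (by linarith)]

theorem cuspProfile_pos (hδ : 0 < δ) {t : ℝ} (ht : 0 < t) (hlam : 0 < lam t) :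
    0 < cuspProfile lam κ δ t := by
  unfold cuspProfile
  split_ifs with hle hgt
  · have : 0 < |t / δ| := abs_pos.mpr (div_pos ht hδ).ne'
    positivity
  · exact hlam
  · exact absurd ⟨ht.le, not_lt.mp hgt⟩ hle

theorem measurable_cuspProfile (hlam : Measurable lam) : Measurable (cuspProfile lam κ δ) :=
  Measurable.ite (measurableSet_Ici.inter measurableSet_Iic)
    (hlam.mul ((measurable_id.div_const δ).abs.pow_const κ))
    (Measurable.ite measurableSet_Ioi hlam measurable_const)

theorem intervalIntegrable_sq_sub_cuspProfile (hκ : 0 ≤ κ) (hδ : 0 ≤ δ) (hcont : Continuous lam)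
    (hlam : ∀ t, 0 ≤ lam t) (u v a b : ℝ) :
    IntervalIntegrable
      (fun t => (cuspProfile lam κ δ (t - u) - cuspProfile lam κ δ (t - v)) ^ 2) volume a b := by
  have hbound : Continuous fun t => (lam (t - u) + lam (t - v)) ^ 2 := by fun_prop
  refine (hbound.intervalIntegrable a b).mono_fun ?_ (Filter.Eventually.of_forall fun t => ?_)
  · have hmeas := measurable_cuspProfile (κ := κ) (δ := δ) hcont.measurable
    exact (((hmeas.comp (measurable_sub_const u)).sub
      (hmeas.comp (measurable_sub_const v))).pow_const 2).aestronglyMeasurable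
  · simp only [Real.norm_eq_abs, abs_pow]
    have habs : |cuspProfile lam κ δ (t - u) - cuspProfile lam κ δ (t - v)|
        ≤ |lam (t - u) + lam (t - v)| := by
      refine (abs_sub _ _).trans ?_
      rw [abs_of_nonneg (cuspProfile_nonneg hlam _), abs_of_nonneg (cuspProfile_nonneg hlam _),
        abs_of_nonneg (add_nonneg (hlam _) (hlam _))]
      exact add_le_add (cuspProfile_le hκ hδ hlam _) (cuspProfile_le hκ hδ hlam _)
    exact pow_le_pow_left₀ (abs_nonneg _) habs 2

end cuspProfile

theorem one_detector_identifiability_general (κ δ T τ₀ τ' : ℝ) (hκ0 : 0 < κ)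
    (hδ : 0 < δ) (hτ0 : 0 ≤ τ₀) (hτ : τ₀ < τ') (hT : τ₀ + δ < T)
    (lam : ℝ → ℝ) (hlam : ContDiff ℝ 1 lam) (hpos : ∀ t, 0 < lam t)
    (S : ℝ → ℝ)
    (hS : S = fun t => if 0 ≤ t ∧ t ≤ δ then lam t * |t / δ| ^ κ
                       else if δ < t then lam t else 0)
    (hint : (∫ t in (0:ℝ)..T, (S (t - τ') - S (t - τ₀)) ^ 2) = 0) :
    τ' = τ₀ := by
  change S = cuspProfile lam κ δ at hS
  subst hS
  have hnonneg : ∀ t, 0 ≤ lam t := fun t => (hpos t).le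
  have hdiff_pos : ∀ t ∈ Ioo τ₀ (min τ' T),
      0 < (cuspProfile lam κ δ (t - τ') - cuspProfile lam κ δ (t - τ₀)) ^ 2 := by
    rintro t ⟨hτ₀t, htτ'⟩
    rw [cuspProfile_of_neg hδ.le (sub_neg.mpr (htτ'.trans_le (min_le_left _ _))), zero_sub, neg_sq]
    exact pow_pos (cuspProfile_pos hδ (sub_pos.mpr hτ₀t) (hpos _)) 2
  exact absurd hint (intervalIntegral_pos_of_pos_on_subinterval hτ0
    (lt_min hτ (by linarith)) (min_le_right _ _) (fun t => sq_nonneg _)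
    (intervalIntegrable_sq_sub_cuspProfile hκ0.le hδ.le hlam.continuous hnonneg _ _ _ _)
    hdiff_pos).ne'

theorem one_detector_identifiability (κ δ T τ₀ τ' : ℝ) (hκ0 : 0 < κ) (hκ : κ < 1/2)
    (hδ : 0 < δ) (hτ0 : 0 ≤ τ₀) (hτ : τ₀ < τ') (hT : τ₀ + δ < T)
    (lam : ℝ → ℝ) (hlam : ContDiff ℝ 1 lam) (hpos : ∀ t, 0 < lam t)
    (S : ℝ → ℝ)
    (hS : S = fun t => if 0 ≤ t ∧ t ≤ δ then lam t * |t / δ| ^ κ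
                       else if δ < t then lam t else 0)
    (hint : (∫ t in (0:ℝ)..T, (S (t - τ') - S (t - τ₀)) ^ 2) = 0) :
    τ' = τ₀ :=
  one_detector_identifiability_general κ δ T τ₀ τ' hκ0 hδ hτ0 hτ hT lam hlam hpos S hS hint
end
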